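/- arXiv:2412.17065 — 3 statements merged into one kernel-verified Lean document; each statement's English description precedes it below -/
import Mathlib

section
/- For positive integers n and k with 1 ≤ k ≤ n, let F(n,k) = binom(n, k−1)^{n+1} · binom(2k, k)^n. Then lim_{n→∞} (1/n²)·ln F(n, ⌊(4/5)·n⌋) = ln 5. -/
open Filter Real

noncomputable def gerr (m : ℕ) : ℝ := Real.log (Nat.factorial m) - m * Real.log m + m

lemma log_nat_div_tendsto : Tendsto (fun m : ℕ => Real.log m / m) atTop (nhds 0) := by
  have h := Real.tendsto_pow_log_div_mul_add_atTop 1 0 1 one_ne_zero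
  simp only [pow_one, one_mul, add_zero] at h
  exact h.comp tendsto_natCast_atTop_atTop

lemma gerr_div_tendsto : Tendsto (fun m : ℕ => gerr m / m) atTop (nhds 0) := by
  have hst : Tendsto (fun m : ℕ => Real.log (Stirling.stirlingSeq m)) atTop
      (nhds (Real.log (Real.sqrt π))) :=
    Stirling.tendsto_stirlingSeq_sqrt_pi.log (by positivity)
  have h1 : Tendsto (fun m : ℕ => Real.log (Stirling.stirlingSeq m) / m) atTop (nhds 0) :=
    hst.div_atTop tendsto_natCast_atTop_atTop
  have h2 : Tendsto (fun m : ℕ => ((1:ℝ)/2) * (Real.log (2 * m) / m)) atTop (nhds ((1/2) * 0)) := by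
    apply Tendsto.const_mul
    have : Tendsto (fun m : ℕ => Real.log 2 / m + Real.log m / m) atTop (nhds (0 + 0)) :=
      (tendsto_const_div_atTop_nhds_zero_nat _).add log_nat_div_tendsto
    rw [add_zero] at this
    apply this.congr'
    filter_upwards [eventually_ge_atTop 1] with m hm
    have hm' : (0:ℝ) < m := by exact_mod_cast hm
    rw [← add_div, ← Real.log_mul (by norm_num) (ne_of_gt hm')]
  have := h1.add h2
  rw [mul_zero, add_zero] at this
  apply this.congr'
  filter_upwards [eventually_ge_atTop 1] with m hm
  have hm' : (0:ℝ) < m := by exact_mod_cast hm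
  have hfac : (0:ℝ) < (Nat.factorial m : ℝ) := by exact_mod_cast Nat.factorial_pos m
  have hpow : (0:ℝ) < ((m:ℝ) / Real.exp 1) ^ m := by positivity
  have hsq : (0:ℝ) < Real.sqrt (2 * m) := Real.sqrt_pos.mpr (by positivity)
  have hlog : Real.log (Stirling.stirlingSeq m)
      = Real.log (Nat.factorial m) - ((1/2) * Real.log (2*m) + m * (Real.log m - 1)) := by
    rw [Stirling.stirlingSeq, Real.log_div (ne_of_gt hfac) (by positivity),
      Real.log_mul (ne_of_gt hsq) (ne_of_gt hpow), Real.log_sqrt (by positivity),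
      Real.log_pow, Real.log_div (ne_of_gt hm') (Real.exp_ne_zero 1), Real.log_exp]
    ring
  simp only [gerr, hlog]
  ring

lemma comp_div_zero {F : ℕ → ℝ} (hF : Tendsto (fun m : ℕ => F m / m) atTop (nhds 0))
    {a : ℕ → ℕ} (ha : Tendsto a atTop atTop) {c : ℝ}
    (hc : Tendsto (fun n : ℕ => (a n : ℝ) / n) atTop (nhds c)) :
    Tendsto (fun n : ℕ => F (a n) / n) atTop (nhds 0) := by
  have := ((hF.comp ha).mul hc)
  rw [zero_mul] at this
  apply this.congr'
  filter_upwards [ha.eventually_ge_atTop 1] with n hn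
  have h0 : ((a n : ℝ)) ≠ 0 := Nat.cast_ne_zero.mpr (by omega)
  simp only [Function.comp]
  field_simp

lemma ratio_of_bounds {a : ℕ → ℕ} {c C : ℝ}
    (h1 : ∀ n : ℕ, c * n - C ≤ (a n : ℝ)) (h2 : ∀ n : ℕ, (a n : ℝ) ≤ c * n + C) :
    Tendsto (fun n : ℕ => (a n : ℝ) / n) atTop (nhds c) := by
  have hlo : Tendsto (fun n : ℕ => c - C / n) atTop (nhds c) := by
    have := (tendsto_const_nhds (x := c) (f := atTop (α := ℕ))).sub
      (tendsto_const_div_atTop_nhds_zero_nat C)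
    rwa [sub_zero] at this
  have hhi : Tendsto (fun n : ℕ => c + C / n) atTop (nhds c) := by
    have := (tendsto_const_nhds (x := c) (f := atTop (α := ℕ))).add
      (tendsto_const_div_atTop_nhds_zero_nat C)
    rwa [add_zero] at this
  refine tendsto_of_tendsto_of_tendsto_of_le_of_le' hlo hhi ?_ ?_
  · filter_upwards [eventually_ge_atTop 1] with n hn
    have hn' : (0:ℝ) < n := by exact_mod_cast hn
    have e : c - C / n = (c * n - C) / n := by field_simp
    rw [e]
    exact (div_le_div_iff_of_pos_right hn').mpr (h1 n)
  · filter_upwards [eventually_ge_atTop 1] with n hn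
    have hn' : (0:ℝ) < n := by exact_mod_cast hn
    have e : c + C / n = (c * n + C) / n := by field_simp
    rw [e]
    exact (div_le_div_iff_of_pos_right hn').mpr (h2 n)

lemma entropy_tendsto :
    Tendsto (fun n : ℕ => Real.log (Nat.choose n (4 * n / 5 - 1)) / n) atTop
      (nhds (-(4/5 * Real.log (4/5)) - 1/5 * Real.log (1/5))) := by
  set a : ℕ → ℕ := fun n => 4 * n / 5 - 1 with ha_def
  set b : ℕ → ℕ := fun n => n - (4 * n / 5 - 1) with hb_def
  -- ratio limits
  have ra : Tendsto (fun n : ℕ => (a n : ℝ) / n) atTop (nhds (4/5)) := by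
    apply ratio_of_bounds (C := 9/5) <;> intro n <;>
    · have h : 4 * n ≤ 5 * a n + 9 ∧ 5 * a n ≤ 4 * n := by simp only [ha_def]; omega
      obtain ⟨h1, h2⟩ := h
      have c1 : (4:ℝ) * n ≤ 5 * a n + 9 := by exact_mod_cast h1
      have c2 : (5:ℝ) * a n ≤ 4 * n := by exact_mod_cast h2
      linarith
  have rb : Tendsto (fun n : ℕ => (b n : ℝ) / n) atTop (nhds (1/5)) := by
    apply ratio_of_bounds (C := 9/5) <;> intro n <;>
    · have h : n ≤ 5 * b n + 9 ∧ 5 * b n ≤ n + 9 := by simp only [hb_def]; omega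
      obtain ⟨h1, h2⟩ := h
      have c1 : (n:ℝ) ≤ 5 * b n + 9 := by exact_mod_cast h1
      have c2 : (5:ℝ) * b n ≤ n + 9 := by exact_mod_cast h2
      linarith
  have ta : Tendsto a atTop atTop := by
    refine tendsto_atTop_atTop.mpr fun m => ⟨5 * m + 9, fun n hn => ?_⟩
    simp only [ha_def]; omega
  have tb : Tendsto b atTop atTop := by
    refine tendsto_atTop_atTop.mpr fun m => ⟨5 * m + 9, fun n hn => ?_⟩
    simp only [hb_def]; omega
  -- gerr pieces
  have g1 : Tendsto (fun n : ℕ => gerr n / n) atTop (nhds 0) := gerr_div_tendsto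
  have g2 : Tendsto (fun n : ℕ => gerr (a n) / n) atTop (nhds 0) :=
    comp_div_zero gerr_div_tendsto ta ra
  have g3 : Tendsto (fun n : ℕ => gerr (b n) / n) atTop (nhds 0) :=
    comp_div_zero gerr_div_tendsto tb rb
  -- entropy pieces
  have e1 : Tendsto (fun n : ℕ => ((a n : ℝ)/n) * Real.log ((a n : ℝ)/n)) atTop
      (nhds (4/5 * Real.log (4/5))) := ra.mul (ra.log (by norm_num))
  have e2 : Tendsto (fun n : ℕ => ((b n : ℝ)/n) * Real.log ((b n : ℝ)/n)) atTop
      (nhds (1/5 * Real.log (1/5))) := rb.mul (rb.log (by norm_num))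
  have total := (((((e1.neg.sub e2).add g1).sub g2).sub g3))
  rw [show -(4/5 * Real.log (4/5)) - 1/5 * Real.log (1/5) + 0 - 0 - 0
      = -(4/5 * Real.log (4/5)) - 1/5 * Real.log (1/5) by ring] at total
  apply total.congr'
  filter_upwards [eventually_ge_atTop 20] with n hn
  have han : a n ≤ n := by simp only [ha_def]; omega
  have ha1 : 1 ≤ a n := by simp only [ha_def]; omega
  have hb1 : 1 ≤ b n := by simp only [hb_def]; omega
  have hab : a n + b n = n := by simp only [ha_def, hb_def]; omega
  have hn' : (0:ℝ) < n := by positivity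
  have haR : (0:ℝ) < a n := by exact_mod_cast ha1
  have hbR : (0:ℝ) < b n := by exact_mod_cast hb1
  -- log of the binomial via factorials
  have hfac := Nat.choose_mul_factorial_mul_factorial han
  have hcast : ((Nat.choose n (a n) : ℝ)) * (Nat.factorial (a n)) * (Nat.factorial (b n))
      = (Nat.factorial n : ℝ) := by
    rw [hb_def]; exact_mod_cast congrArg (Nat.cast (R := ℝ)) hfac
  have hCpos : (0:ℝ) < (Nat.choose n (a n) : ℝ) := by
    exact_mod_cast Nat.choose_pos han
  have hfa : (0:ℝ) < (Nat.factorial (a n) : ℝ) := by exact_mod_cast Nat.factorial_pos _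
  have hfb : (0:ℝ) < (Nat.factorial (b n) : ℝ) := by exact_mod_cast Nat.factorial_pos _
  have hlogC : Real.log (Nat.choose n (a n))
      = Real.log (Nat.factorial n) - Real.log (Nat.factorial (a n))
        - Real.log (Nat.factorial (b n)) := by
    have := congrArg Real.log hcast
    rw [Real.log_mul (by positivity) (ne_of_gt hfb),
      Real.log_mul (ne_of_gt hCpos) (ne_of_gt hfa)] at this
    linarith
  -- unfold gerr
  have gn : Real.log (Nat.factorial n) = (n:ℝ) * Real.log n - n + gerr n := by
    simp only [gerr]; ring
  have gaE : Real.log (Nat.factorial (a n))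
      = (a n : ℝ) * Real.log (a n) - a n + gerr (a n) := by simp only [gerr]; ring
  have gbE : Real.log (Nat.factorial (b n))
      = (b n : ℝ) * Real.log (b n) - b n + gerr (b n) := by simp only [gerr]; ring
  have habR : (a n : ℝ) + b n = n := by exact_mod_cast hab
  have la : Real.log ((a n : ℝ)/n) = Real.log (a n) - Real.log n :=
    Real.log_div (ne_of_gt haR) (ne_of_gt hn')
  have lb : Real.log ((b n : ℝ)/n) = Real.log (b n) - Real.log n :=
    Real.log_div (ne_of_gt hbR) (ne_of_gt hn')
  have key : Real.log (Nat.choose n (a n))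
      = -((a n : ℝ) * Real.log ((a n : ℝ)/n)) - (b n : ℝ) * Real.log ((b n : ℝ)/n)
        + gerr n - gerr (a n) - gerr (b n) := by
    rw [hlogC, gn, gaE, gbE, la, lb]
    have : (n:ℝ) * Real.log n = (a n : ℝ) * Real.log n + (b n : ℝ) * Real.log n := by
      rw [← add_mul, habR]
    rw [this]
    ring_nf
    nlinarith [habR]
  rw [key]
  field_simp

lemma central_le_four_pow (k : ℕ) : Nat.choose (2 * k) k ≤ 4 ^ k := by
  calc Nat.choose (2 * k) k ≤ ∑ i ∈ Finset.range (2 * k + 1), Nat.choose (2 * k) i :=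
        Finset.single_le_sum (fun i _ => Nat.zero_le _)
          (Finset.mem_range.mpr (by omega))
    _ = 2 ^ (2 * k) := Nat.sum_range_choose (2 * k)
    _ = 4 ^ k := by rw [pow_mul]; norm_num

lemma central_tendsto :
    Tendsto (fun n : ℕ => Real.log (Nat.choose (2 * (4 * n / 5)) (4 * n / 5)) / n) atTop
      (nhds (4/5 * Real.log 4)) := by
  set k : ℕ → ℕ := fun n => 4 * n / 5 with hk_def
  have rk : Tendsto (fun n : ℕ => (k n : ℝ) / n) atTop (nhds (4/5)) := by
    apply ratio_of_bounds (C := 1) <;> intro n <;>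
    · have h : 4 * n ≤ 5 * k n + 4 ∧ 5 * k n ≤ 4 * n := by simp only [hk_def]; omega
      obtain ⟨h1, h2⟩ := h
      have c1 : (4:ℝ) * n ≤ 5 * k n + 4 := by exact_mod_cast h1
      have c2 : (5:ℝ) * k n ≤ 4 * n := by exact_mod_cast h2
      linarith
  have rk2 : Tendsto (fun n : ℕ => ((2 * k n + 1 : ℕ) : ℝ) / n) atTop (nhds (8/5)) := by
    apply ratio_of_bounds (C := 3) <;> intro n <;>
    · have h : 8 * n ≤ 5 * (2 * k n + 1) + 8 ∧ 5 * (2 * k n + 1) ≤ 8 * n + 5 := by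
        simp only [hk_def]; omega
      obtain ⟨h1, h2⟩ := h
      have c1 : (8:ℝ) * n ≤ 5 * ((2 * k n + 1 : ℕ) : ℝ) + 8 := by exact_mod_cast h1
      have c2 : (5:ℝ) * ((2 * k n + 1 : ℕ) : ℝ) ≤ 8 * n + 5 := by exact_mod_cast h2
      linarith
  have tk2 : Tendsto (fun n : ℕ => 2 * k n + 1) atTop atTop := by
    refine tendsto_atTop_atTop.mpr fun m => ⟨5 * m + 9, fun n hn => ?_⟩
    simp only [hk_def]; omega
  have hlogk : Tendsto (fun n : ℕ => Real.log ((2 * k n + 1 : ℕ) : ℝ) / n) atTop (nhds 0) :=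
    comp_div_zero log_nat_div_tendsto tk2 rk2
  have hhi : Tendsto (fun n : ℕ => ((k n : ℝ) / n) * Real.log 4) atTop
      (nhds (4/5 * Real.log 4)) := rk.mul_const _
  have hlo : Tendsto (fun n : ℕ => ((k n : ℝ) / n) * Real.log 4
      - Real.log ((2 * k n + 1 : ℕ) : ℝ) / n) atTop (nhds (4/5 * Real.log 4)) := by
    have := hhi.sub hlogk
    rwa [sub_zero] at this
  refine tendsto_of_tendsto_of_tendsto_of_le_of_le' hlo hhi ?_ ?_
  · filter_upwards [eventually_ge_atTop 5] with n hn
    have hn' : (0:ℝ) < n := by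
      have : (5:ℝ) ≤ n := by exact_mod_cast hn
      linarith
    have hk1 : 1 ≤ k n := by simp only [hk_def]; omega
    have hCpos : 0 < Nat.choose (2 * k n) (k n) := Nat.choose_pos (by omega)
    have hlow := Nat.four_pow_le_two_mul_add_one_mul_central_binom (k n)
    have hlowR : ((4:ℝ)) ^ (k n) ≤ ((2 * k n + 1 : ℕ) : ℝ) * (Nat.choose (2 * k n) (k n) : ℝ) := by
      exact_mod_cast hlow
    have hlog := Real.log_le_log (by positivity) hlowR
    rw [Real.log_pow, Real.log_mul (by positivity) (by exact_mod_cast hCpos.ne')] at hlog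
    show (k n : ℝ) / n * Real.log 4 - Real.log ((2 * k n + 1 : ℕ) : ℝ) / n
        ≤ Real.log ((Nat.choose (2 * k n) (k n) : ℕ) : ℝ) / n
    rw [div_mul_eq_mul_div, div_sub_div_same]
    gcongr
    linarith
  · filter_upwards [eventually_ge_atTop 5] with n hn
    have hn' : (0:ℝ) < n := by
      have : (5:ℝ) ≤ n := by exact_mod_cast hn
      linarith
    have hCpos : 0 < Nat.choose (2 * k n) (k n) := Nat.choose_pos (by omega)
    have hupR : ((Nat.choose (2 * k n) (k n) : ℕ) : ℝ) ≤ (4:ℝ) ^ (k n) := by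
      exact_mod_cast central_le_four_pow (k n)
    have hlog2 := Real.log_le_log (by exact_mod_cast hCpos) hupR
    rw [Real.log_pow] at hlog2
    show Real.log ((Nat.choose (2 * k n) (k n) : ℕ) : ℝ) / n ≤ (k n : ℝ) / n * Real.log 4
    rw [div_mul_eq_mul_div]
    gcongr

/-- With F(n,k) = binom(n,k−1)^{n+1}·binom(2k,k)^n,
one has lim_{n→∞} (1/n²)·ln F(n, ⌊(4/5)n⌋) = ln 5.
(Here ⌊(4/5)n⌋ = 4*n/5 in natural number division.) -/
theorem stmt_5 :
    Filter.Tendsto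
      (fun n : ℕ =>
        Real.log ((Nat.choose n (4 * n / 5 - 1) ^ (n + 1)
            * Nat.choose (2 * (4 * n / 5)) (4 * n / 5) ^ n : ℕ) : ℝ) / (n : ℝ) ^ 2)
      Filter.atTop (nhds (Real.log 5)) := by
  have h1 : Tendsto (fun n : ℕ => ((n : ℝ) + 1) / n) atTop (nhds 1) := by
    have := (tendsto_const_nhds (x := (1:ℝ)) (f := atTop (α := ℕ))).add
      tendsto_one_div_atTop_nhds_zero_nat
    rw [add_zero] at this
    apply this.congr'
    filter_upwards [eventually_ge_atTop 1] with n hn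
    have hn' : (0:ℝ) < n := by exact_mod_cast hn
    field_simp
  have total := (h1.mul entropy_tendsto).add central_tendsto
  have hval : 1 * (-(4/5 * Real.log (4/5)) - 1/5 * Real.log (1/5)) + 4/5 * Real.log 4
      = Real.log 5 := by
    rw [show (4:ℝ)/5 = 4/5 by rfl, Real.log_div (by norm_num) (by norm_num),
      show (1:ℝ)/5 = 5⁻¹ by norm_num, Real.log_inv]
    ring
  rw [hval] at total
  apply total.congr'
  filter_upwards [eventually_ge_atTop 5] with n hn
  have hn' : (0:ℝ) < n := by
    have : (5:ℝ) ≤ n := by exact_mod_cast hn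
    linarith
  have hC1 : 0 < Nat.choose n (4 * n / 5 - 1) := Nat.choose_pos (by omega)
  have hC2 : 0 < Nat.choose (2 * (4 * n / 5)) (4 * n / 5) := Nat.choose_pos (by omega)
  have hC1R : (0:ℝ) < (Nat.choose n (4 * n / 5 - 1) : ℝ) := by exact_mod_cast hC1
  have hC2R : (0:ℝ) < (Nat.choose (2 * (4 * n / 5)) (4 * n / 5) : ℝ) := by exact_mod_cast hC2
  have hcast : ((Nat.choose n (4 * n / 5 - 1) ^ (n + 1)
      * Nat.choose (2 * (4 * n / 5)) (4 * n / 5) ^ n : ℕ) : ℝ)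
      = (Nat.choose n (4 * n / 5 - 1) : ℝ) ^ (n + 1)
        * (Nat.choose (2 * (4 * n / 5)) (4 * n / 5) : ℝ) ^ n := by push_cast; ring
  rw [hcast, Real.log_mul (by positivity) (by positivity), Real.log_pow, Real.log_pow]
  field_simp
  push_cast
  ring
end

section
/- Fix x with 0 < x < 1/2 and let p(u,v) = 1 − x²v²/u − x/v be viewed as a function of v on the unit circle with |u| = 1. Then the formal power series expansion in x of the coefficient Φ₀(u) = cf_{v^{-1}}( v / (1 − x²v²/u − x/v) ) satisfies (x²/u)·Φ₀(u) = Σ_{n≥1} binom(3n−1, n−1) · x^{4n} / u^n. -/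
open Real

lemma aux_zpow (m : ℤ) :
    (∮ v in C((0:ℂ), 1), v ^ m) = if m = -1 then 2 * Real.pi * Complex.I else 0 := by
  split_ifs with h
  · subst h
    have := circleIntegral.integral_sub_inv_of_mem_ball (c := (0:ℂ)) (w := 0) (R := 1)
      (by simp)
    simpa [zpow_neg_one] using this
  · simpa using circleIntegral.integral_sub_zpow_of_ne h (0:ℂ) 0 1

lemma aux_integrable (c : ℂ) (m : ℤ) : CircleIntegrable (fun v => c * v ^ m) (0:ℂ) 1 := by
  apply ContinuousOn.circleIntegrable zero_le_one
  refine continuousOn_const.mul (ContinuousOn.zpow₀ continuousOn_id m fun v hv => ?_)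
  left
  simp only [Metric.mem_sphere, dist_zero_right] at hv
  simp only [id_eq]
  intro h0
  rw [h0] at hv
  norm_num at hv

lemma aux_sum {ι : Type*} (s : Finset ι) (F : ι → ℂ → ℂ)
    (h : ∀ i ∈ s, CircleIntegrable (F i) (0:ℂ) 1) :
    (∮ v in C((0:ℂ), 1), ∑ i ∈ s, F i v) = ∑ i ∈ s, ∮ v in C((0:ℂ), 1), F i v := by
  simp only [circleIntegral, smul_eq_mul, Finset.mul_sum]
  exact intervalIntegral.integral_finset_sum fun i hi => (h i hi).out

lemma term_integral (x u : ℂ) (hu : u ≠ 0) (k : ℕ) :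
    (∮ v in C((0:ℂ), 1), v * (x^2*v^2/u + x/v)^k)
      = ∑ j ∈ Finset.range (k+1), (k.choose j : ℂ) * x^(k+j) * u^(-(j:ℤ))
          * (if 3*(j:ℤ)+1-(k:ℤ) = -1 then 2*Real.pi*Complex.I else 0) := by
  have h1 : (∮ v in C((0:ℂ),1), v * (x^2*v^2/u + x/v)^k)
      = ∮ v in C((0:ℂ),1), ∑ j ∈ Finset.range (k+1),
          (k.choose j : ℂ) * x^(k+j) * u^(-(j:ℤ)) * v^(3*(j:ℤ)+1-(k:ℤ)) := by
    refine circleIntegral.integral_congr zero_le_one fun v hv => ?_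
    have hv0 : v ≠ 0 := by
      simp only [Metric.mem_sphere, dist_zero_right] at hv
      intro h0; rw [h0] at hv; norm_num at hv
    rw [add_pow, Finset.mul_sum]
    refine (Finset.sum_congr rfl fun j hj => ?_).symm
    obtain ⟨d, rfl⟩ := Nat.exists_eq_add_of_le (Nat.lt_succ_iff.mp (Finset.mem_range.mp hj))
    have hd : j + d - j = d := by omega
    have hc : (3*(j:ℤ)+1) = ((3*j+1 : ℕ) : ℤ) := by push_cast; ring
    rw [hd, zpow_sub₀ hv0, hc, zpow_natCast, zpow_natCast, zpow_neg, zpow_natCast]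
    simp only [div_pow]
    field_simp
    ring
  rw [h1, aux_sum _ _ (fun j _ => aux_integrable _ _)]
  exact Finset.sum_congr rfl fun j _ => by
    rw [circleIntegral.integral_const_mul, aux_zpow]

lemma term_zero (x u : ℂ) (hu : u ≠ 0) (k : ℕ) (hk : ∀ j : ℕ, k ≠ 3*j+2) :
    (∮ v in C((0:ℂ), 1), v * (x^2*v^2/u + x/v)^k) = 0 := by
  rw [term_integral x u hu k]
  refine Finset.sum_eq_zero fun j hj => ?_
  rw [if_neg, mul_zero]
  intro h
  exact hk j (by omega)

lemma term_exact (x u : ℂ) (hu : u ≠ 0) (j : ℕ) :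
    (∮ v in C((0:ℂ), 1), v * (x^2*v^2/u + x/v)^(3*j+2))
      = 2*Real.pi*Complex.I * (((3*j+2).choose j : ℕ) : ℂ) * x^(4*j+2) * u^(-(j:ℤ)) := by
  rw [term_integral x u hu]
  rw [Finset.sum_eq_single j]
  · rw [if_pos (by push_cast; ring)]
    have : 3*j+2+j = 4*j+2 := by omega
    rw [this]; ring
  · intro i _ hij
    rw [if_neg, mul_zero]
    intro h
    exact hij (by omega)
  · intro h
    exact absurd (Finset.mem_range.mpr (by omega)) h

lemma swap_lemma (x : ℝ) (hx : 0 < x) (hx' : x < 1/2) (u : ℂ) (hu : ‖u‖ = 1) :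
    (∮ v in C((0:ℂ), 1), v / (1 - (x:ℂ)^2*v^2/u - (x:ℂ)/v))
      = ∑' k : ℕ, ∮ v in C((0:ℂ), 1), v * ((x:ℂ)^2*v^2/u + (x:ℂ)/v)^k := by
  set r : ℝ := x^2 + x with hrdef
  have hr0 : 0 ≤ r := by positivity
  have hr1 : r < 1 := by nlinarith
  have hu0 : u ≠ 0 := by intro h; rw [h] at hu; simp at hu
  have hv0 : ∀ v ∈ Metric.sphere (0:ℂ) 1, v ≠ 0 := by
    intro v hv h0
    simp only [Metric.mem_sphere, dist_zero_right] at hv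
    rw [h0] at hv; norm_num at hv
  have hgb : ∀ v ∈ Metric.sphere (0:ℂ) 1, ‖(x:ℂ)^2*v^2/u + (x:ℂ)/v‖ ≤ r := by
    intro v hv
    simp only [Metric.mem_sphere, dist_zero_right] at hv
    calc ‖(x:ℂ)^2*v^2/u + (x:ℂ)/v‖ ≤ ‖(x:ℂ)^2*v^2/u‖ + ‖(x:ℂ)/v‖ := norm_add_le _ _
    _ = r := by
      simp [norm_div, norm_mul, norm_pow, hu, hv, Complex.norm_real, abs_of_pos hx, hrdef]
  have hcont : ∀ k : ℕ,
      CircleIntegrable (fun v => v * ((x:ℂ)^2*v^2/u + (x:ℂ)/v)^k) (0:ℂ) 1 := by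
    intro k
    apply ContinuousOn.circleIntegrable zero_le_one
    have c1 : ContinuousOn (fun v : ℂ => (x:ℂ)^2*v^2/u) (Metric.sphere (0:ℂ) 1) :=
      (continuousOn_const.mul (continuousOn_id.pow 2)).div_const u
    have c2 : ContinuousOn (fun v : ℂ => (x:ℂ)/v) (Metric.sphere (0:ℂ) 1) :=
      continuousOn_const.div continuousOn_id (by simpa using hv0)
    exact continuousOn_id.mul ((c1.add c2).pow k)
  have hstep1 : (∮ v in C((0:ℂ), 1), v / (1 - (x:ℂ)^2*v^2/u - (x:ℂ)/v))
      = ∮ v in C((0:ℂ), 1), ∑' k : ℕ, v * ((x:ℂ)^2*v^2/u + (x:ℂ)/v)^k := by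
    refine circleIntegral.integral_congr zero_le_one fun v hv => ?_
    have hg : ‖(x:ℂ)^2*v^2/u + (x:ℂ)/v‖ < 1 := lt_of_le_of_lt (hgb v hv) hr1
    rw [tsum_mul_left, tsum_geometric_of_norm_lt_one hg, sub_sub, div_eq_mul_inv]
  rw [hstep1]
  simp only [circleIntegral, intervalIntegral.integral_of_le Real.two_pi_pos.le,
    smul_eq_mul]
  have hInt : ∀ k : ℕ, MeasureTheory.Integrable
      (fun θ : ℝ => deriv (circleMap 0 1) θ *
        (circleMap 0 1 θ * ((x:ℂ)^2*(circleMap 0 1 θ)^2/u + (x:ℂ)/(circleMap 0 1 θ))^k))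
      (MeasureTheory.volume.restrict (Set.Ioc 0 (2*π))) := by
    intro k
    have := (hcont k).out
    rw [intervalIntegrable_iff_integrableOn_Ioc_of_le Real.two_pi_pos.le] at this
    simpa [smul_eq_mul, MeasureTheory.IntegrableOn] using this
  have hnorm : ∀ (k : ℕ) (θ : ℝ), ‖deriv (circleMap 0 1) θ *
        (circleMap 0 1 θ * ((x:ℂ)^2*(circleMap 0 1 θ)^2/u + (x:ℂ)/(circleMap 0 1 θ))^k)‖
        ≤ r ^ k := by
    intro k θ
    have hmem := circleMap_mem_sphere (0:ℂ) zero_le_one θ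
    rw [norm_mul, norm_mul, norm_pow, deriv_circleMap]
    have h1 : ‖circleMap 0 1 θ * Complex.I‖ = 1 := by simp
    have h2 : ‖circleMap 0 1 θ‖ = 1 := by simp
    rw [h1, h2, one_mul, one_mul]
    exact pow_le_pow_left₀ (norm_nonneg _) (hgb _ hmem) k
  have hSum : Summable fun k : ℕ => ∫ θ in Set.Ioc (0:ℝ) (2*π),
      ‖deriv (circleMap 0 1) θ *
        (circleMap 0 1 θ * ((x:ℂ)^2*(circleMap 0 1 θ)^2/u + (x:ℂ)/(circleMap 0 1 θ))^k)‖ := by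
    refine Summable.of_nonneg_of_le
      (fun k => MeasureTheory.integral_nonneg fun θ => norm_nonneg _)
      (fun k => ?_) (((summable_geometric_of_lt_one hr0 hr1).mul_left (2*π)))
    calc (∫ θ in Set.Ioc (0:ℝ) (2*π), ‖deriv (circleMap 0 1) θ *
        (circleMap 0 1 θ * ((x:ℂ)^2*(circleMap 0 1 θ)^2/u + (x:ℂ)/(circleMap 0 1 θ))^k)‖)
        ≤ ∫ _ in Set.Ioc (0:ℝ) (2*π), r ^ k := by
          refine MeasureTheory.setIntegral_mono_on ((hInt k).norm) ?_ measurableSet_Ioc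
            fun θ _ => hnorm k θ
          exact (MeasureTheory.integrableOn_const_iff).mpr (Or.inr (by
            rw [Real.volume_Ioc]; exact ENNReal.ofReal_lt_top))
      _ = 2*π * r ^ k := by
          rw [MeasureTheory.setIntegral_const, Real.volume_real_Ioc_of_le Real.two_pi_pos.le, smul_eq_mul]
          ring
  calc (∫ θ in Set.Ioc (0:ℝ) (2*π), deriv (circleMap 0 1) θ *
          ∑' k : ℕ, circleMap 0 1 θ * ((x:ℂ)^2*(circleMap 0 1 θ)^2/u + (x:ℂ)/(circleMap 0 1 θ))^k)
      = ∫ θ in Set.Ioc (0:ℝ) (2*π), ∑' k : ℕ, deriv (circleMap 0 1) θ *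
          (circleMap 0 1 θ * ((x:ℂ)^2*(circleMap 0 1 θ)^2/u + (x:ℂ)/(circleMap 0 1 θ))^k) := by
        refine MeasureTheory.integral_congr_ae (Filter.Eventually.of_forall fun θ => ?_)
        exact (tsum_mul_left).symm
    _ = ∑' k : ℕ, ∫ θ in Set.Ioc (0:ℝ) (2*π), deriv (circleMap 0 1) θ *
          (circleMap 0 1 θ * ((x:ℂ)^2*(circleMap 0 1 θ)^2/u + (x:ℂ)/(circleMap 0 1 θ))^k) :=
        (MeasureTheory.integral_tsum_of_summable_integral_norm hInt hSum).symm

/-- For fixed 0 < x < 1/2 and u on the unit circle, with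
Φ₀(u) = cf_{v⁻¹}( v / (1 − x²v²/u − x/v) ) computed as a Cauchy integral over the
unit circle, one has (x²/u)·Φ₀(u) = Σ_{n≥1} binom(3n−1, n−1)·x^{4n}/uⁿ. -/
theorem stmt_8 (x : ℝ) (hx : 0 < x) (hx' : x < 1 / 2) (u : ℂ) (hu : ‖u‖ = 1) :
    ((x : ℂ) ^ 2 / u) *
      ((2 * (Real.pi : ℂ) * Complex.I)⁻¹ *
        ∮ v in C((0 : ℂ), 1), v / (1 - (x : ℂ) ^ 2 * v ^ 2 / u - (x : ℂ) / v))
    = ∑' n : ℕ, (Nat.choose (3 * (n + 1) - 1) ((n + 1) - 1) : ℂ)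
        * (x : ℂ) ^ (4 * (n + 1)) / u ^ (n + 1) := by
  have hu0 : u ≠ 0 := by intro h; rw [h] at hu; simp at hu
  have hpi : (2 * (Real.pi : ℂ) * Complex.I) ≠ 0 := by
    simp [Real.pi_ne_zero, Complex.I_ne_zero, Complex.ofReal_ne_zero]
  rw [swap_lemma x hx hx' u hu]
  have hre : (∑' k : ℕ, ∮ v in C((0:ℂ), 1), v * ((x:ℂ)^2*v^2/u + (x:ℂ)/v)^k)
      = ∑' j : ℕ, ∮ v in C((0:ℂ), 1), v * ((x:ℂ)^2*v^2/u + (x:ℂ)/v)^(3*j+2) := by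
    refine (Function.Injective.tsum_eq (g := fun j : ℕ => 3*j+2) ?_ ?_).symm
    · intro a b hab; simp only at hab; omega
    · intro k hk
      by_contra hkr
      refine hk ?_
      apply term_zero _ _ hu0
      intro j hj
      exact hkr ⟨j, hj.symm⟩
  rw [hre]
  have hterm : ∀ j : ℕ, (∮ v in C((0:ℂ), 1), v * ((x:ℂ)^2*v^2/u + (x:ℂ)/v)^(3*j+2))
      = 2*Real.pi*Complex.I * (((3*j+2).choose j : ℕ) : ℂ) * (x:ℂ)^(4*j+2) * u^(-(j:ℤ)) :=
    fun j => term_exact (x:ℂ) u hu0 j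
  have hfac : (∑' j : ℕ, ∮ v in C((0:ℂ), 1), v * ((x:ℂ)^2*v^2/u + (x:ℂ)/v)^(3*j+2))
      = (2*Real.pi*Complex.I) *
        ∑' j : ℕ, (((3*j+2).choose j : ℕ) : ℂ) * (x:ℂ)^(4*j+2) * u^(-(j:ℤ)) := by
    rw [← tsum_mul_left]
    exact tsum_congr fun j => by rw [hterm j]; ring
  rw [hfac, inv_mul_cancel_left₀ hpi, ← tsum_mul_left]
  refine tsum_congr fun n => ?_
  have h1 : 3 * (n + 1) - 1 = 3*n+2 := by omega
  have h2 : (n + 1) - 1 = n := by omega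
  rw [h1, h2, zpow_neg, zpow_natCast,
    show 4*(n+1) = (4*n+2)+2 from by ring, pow_add]
  field_simp
  ring
end

section
/- Let f be analytic on an annulus containing the unit circle with real Laurent coefficients c_m, and let ω₀ = e^{2πi/(4n)}, ω = e^{2πi/n}. Then c_0 − (1/n)·Re Σ_{k=1}^n f(ω₀ ω^k) = −Re Σ_{m ≠ 0, n | m} i^{m/n} c_m; in particular all terms with m ≡ ±n mod 4n contribute zero real part, so the error involves only coefficients c_m with |m| ≥ 2n and n | m. -/
open Real

/-- The ¼-shift trick: for f analytic on an annulus containing the unit circle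
with real Laurent coefficients c_m, and ω₀ = e^{2πi/(4n)}, ω = e^{2πi/n}:
c₀ − (1/n)·Re Σ_{k=1}^n f(ω₀ωᵏ) = −Re Σ_{m≠0, n∣m} i^{m/n} c_m, and every term
with m ≡ ±n (mod 4n) (i.e. m/n odd) has zero real part. -/
theorem stmt_15 (n : ℕ) (hn : 0 < n) (r : ℝ) (hr : 1 < r) (f : ℂ → ℂ) (c : ℤ → ℝ)
    (hf : ∀ z : ℂ, 1 / r < ‖z‖ → ‖z‖ < r →
      HasSum (fun m : ℤ => (c m : ℂ) * z ^ m) (f z)) :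
    (c 0 - (1 / (n : ℝ)) *
        (∑ k ∈ Finset.range n,
          f (Complex.exp (2 * (Real.pi : ℂ) * Complex.I / (4 * n)) *
             Complex.exp (2 * (Real.pi : ℂ) * Complex.I * (k + 1) / n))).re
      = -(∑' m : {m : ℤ // m ≠ 0 ∧ (n : ℤ) ∣ m},
            Complex.I ^ ((m : ℤ) / (n : ℤ)) * (c (m : ℤ) : ℂ)).re) ∧
    ∀ m : ℤ, (n : ℤ) ∣ m → Odd (m / (n : ℤ)) →
      (Complex.I ^ (m / (n : ℤ)) * (c m : ℂ)).re = 0 := by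
  have hn' : (n : ℂ) ≠ 0 := Nat.cast_ne_zero.mpr hn.ne'
  have hnR : (n : ℝ) ≠ 0 := Nat.cast_ne_zero.mpr hn.ne'
  set w0 : ℂ := Complex.exp (2 * (Real.pi : ℂ) * Complex.I / (4 * n)) with hw0
  set w : ℂ := Complex.exp (2 * (Real.pi : ℂ) * Complex.I / n) with hw
  -- part 2
  have part2 : ∀ m : ℤ, (n : ℤ) ∣ m → Odd (m / (n : ℤ)) →
      (Complex.I ^ (m / (n : ℤ)) * (c m : ℂ)).re = 0 := by
    intro m _ hodd
    obtain ⟨l, hl⟩ := hodd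
    rw [hl, zpow_add₀ Complex.I_ne_zero, zpow_one, zpow_mul]
    have : (Complex.I : ℂ) ^ (2 : ℤ) = -1 := by
      norm_num [zpow_two, Complex.I_mul_I]
    rw [this]
    rcases Int.even_or_odd l with ⟨t, ht⟩ | ⟨t, ht⟩
    · rw [ht]
      rw [show (-1 : ℂ) ^ (t + t) = 1 by
        rw [← two_mul, zpow_mul]; norm_num]
      simp
    · rw [ht, zpow_add₀ (by norm_num : (-1:ℂ) ≠ 0), zpow_one]
      rw [show (-1 : ℂ) ^ (2*t) = 1 by rw [zpow_mul]; norm_num]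
      simp
  refine ⟨?_, part2⟩
  -- norms
  have hwn0 : w ≠ 0 := Complex.exp_ne_zero _
  have hz : ∀ k : ℕ, Complex.exp (2 * (Real.pi : ℂ) * Complex.I * (k + 1) / n) = w ^ (k+1) := by
    intro k
    rw [hw, ← Complex.exp_nat_mul]
    congr 1
    push_cast
    ring
  have hnorm : ∀ k : ℕ, ‖w0 * w ^ (k+1)‖ = 1 := by
    intro k
    rw [norm_mul, norm_pow]
    have h1 : ‖w0‖ = 1 := by
      have e : 2 * (Real.pi : ℂ) * Complex.I / (4 * n) = ((2 * Real.pi / (4*n) : ℝ) : ℂ) * Complex.I := by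
        push_cast; ring
      rw [hw0, e, Complex.norm_exp_ofReal_mul_I]
    have h2 : ‖w‖ = 1 := by
      have e : 2 * (Real.pi : ℂ) * Complex.I / n = ((2 * Real.pi / n : ℝ) : ℂ) * Complex.I := by
        push_cast; ring
      rw [hw, e, Complex.norm_exp_ofReal_mul_I]
    rw [h1, h2]
    simp
  -- each point is in annulus
  have H : ∀ k : ℕ, HasSum (fun m : ℤ => (c m : ℂ) * (w0 * w ^ (k+1)) ^ m) (f (w0 * w ^ (k+1))) := by
    intro k
    apply hf
    · rw [hnorm k]
      rw [div_lt_one (by linarith)]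
      exact hr
    · rw [hnorm k]; exact hr
  -- w^m = 1 ↔ n ∣ m
  have hwm : ∀ m : ℤ, w ^ m = 1 ↔ (n : ℤ) ∣ m := by
    intro m
    rw [hw, ← Complex.exp_int_mul, Complex.exp_eq_one_iff]
    constructor
    · rintro ⟨k, hk⟩
      refine ⟨k, ?_⟩
      have h2pi : (2 * (Real.pi : ℂ) * Complex.I) ≠ 0 := by
        simp [Complex.I_ne_zero, Real.pi_ne_zero]
      have := hk
      field_simp at this
      have h3 : (m : ℂ) * (2 * (Real.pi : ℂ) * Complex.I) = ((n : ℂ) * k) * (2 * (Real.pi : ℂ) * Complex.I) := by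
        rw [this]
      have h4 : (m : ℂ) = ((n : ℂ) * k) := mul_right_cancel₀ h2pi h3
      exact_mod_cast h4
    · rintro ⟨k, hk⟩
      refine ⟨k, ?_⟩
      rw [hk]
      push_cast
      field_simp
  -- w0^(n*j) = I^j
  have hw0n : w0 ^ (n : ℤ) = Complex.I := by
    rw [hw0, ← Complex.exp_int_mul]
    have : ((n : ℤ) : ℂ) * (2 * (Real.pi : ℂ) * Complex.I / (4 * n)) = ((Real.pi/2 : ℝ) : ℂ) * Complex.I := by
      push_cast
      field_simp
      ring
    rw [this, Complex.exp_mul_I]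
    simp [← Complex.ofReal_cos, ← Complex.ofReal_sin]
  -- w^n = 1
  have hwn1 : w ^ (n : ℕ) = 1 := by
    rw [hw, ← Complex.exp_nat_mul]
    have : (n : ℂ) * (2 * (Real.pi : ℂ) * Complex.I / n) = 2 * (Real.pi : ℂ) * Complex.I := by
      field_simp
    rw [this, Complex.exp_two_pi_mul_I]
  -- key pointwise identity
  have key : ∀ m : ℤ, (∑ k ∈ Finset.range n, (c m : ℂ) * (w0 * w ^ (k+1)) ^ m)
      = (n : ℂ) * (if (n : ℤ) ∣ m then Complex.I ^ (m / (n : ℤ)) * (c m : ℂ) else 0) := by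
    intro m
    have hpow : ∀ k : ℕ, (c m : ℂ) * (w0 * w ^ (k+1)) ^ m
        = (c m : ℂ) * w0 ^ m * (w ^ m) ^ (k+1) := by
      intro k
      rw [mul_zpow]
      rw [← zpow_natCast w (k+1), ← zpow_mul, mul_comm (((k+1 : ℕ) : ℤ)) m, zpow_mul,
        zpow_natCast]
      ring
    simp only [hpow]
    rw [← Finset.mul_sum]
    by_cases hd : (n : ℤ) ∣ m
    · rw [if_pos hd]
      obtain ⟨j, hj⟩ := hd
      have hx1 : w ^ m = 1 := (hwm m).mpr ⟨j, hj⟩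
      have hj' : m / (n : ℤ) = j := by
        rw [hj, Int.mul_ediv_cancel_left _ (by exact_mod_cast hn.ne' : (n:ℤ) ≠ 0)]
      have hw0m : w0 ^ m = Complex.I ^ (m / (n : ℤ)) := by
        rw [hj', hj, zpow_mul, hw0n]
      rw [hx1, hw0m]
      simp
      ring
    · rw [if_neg hd]
      have hx1 : w ^ m ≠ 1 := fun h => hd ((hwm m).mp h)
      have hxn : (w ^ m) ^ (n : ℕ) = 1 := by
        rw [← zpow_natCast (w^m) n, ← zpow_mul, mul_comm, zpow_mul, zpow_natCast, hwn1,
          one_zpow]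
      have : ∑ k ∈ Finset.range n, (w ^ m) ^ (k+1) = 0 := by
        have := geom_sum_eq hx1 n
        calc ∑ k ∈ Finset.range n, (w ^ m) ^ (k+1)
            = (w ^ m) * ∑ k ∈ Finset.range n, (w ^ m) ^ k := by
              rw [Finset.mul_sum]; exact Finset.sum_congr rfl fun k _ => by ring
          _ = (w ^ m) * (((w^m)^(n:ℕ) - 1) / (w^m - 1)) := by rw [this]
          _ = 0 := by rw [hxn]; simp
      rw [this]
      ring
  -- assemble the sums
  have Hsum : HasSum (fun m : ℤ => (n : ℂ) * (if (n : ℤ) ∣ m then Complex.I ^ (m / (n : ℤ)) * (c m : ℂ) else 0))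
      (∑ k ∈ Finset.range n, f (w0 * w ^ (k+1))) := by
    have := hasSum_sum (fun k (_ : k ∈ Finset.range n) => H k)
    convert this using 1
    funext m
    exact (key m).symm
  set S : ℂ := (∑ k ∈ Finset.range n, f (w0 * w ^ (k+1))) / n with hS
  have Hg : HasSum (fun m : ℤ => (if (n : ℤ) ∣ m then Complex.I ^ (m / (n : ℤ)) * (c m : ℂ) else 0)) S := by
    have := Hsum.div_const (n : ℂ)
    rw [← hS] at this
    simpa only [mul_div_cancel_left₀ _ hn'] using this
  have Hupd := Hg.update 0 0
  have hg0 : (if (n : ℤ) ∣ (0:ℤ) then Complex.I ^ ((0:ℤ) / (n : ℤ)) * (c 0 : ℂ) else 0) = (c 0 : ℂ) := by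
    rw [if_pos (dvd_zero _)]
    simp
  have hupdeq : Function.update
      (fun m : ℤ => (if (n : ℤ) ∣ m then Complex.I ^ (m / (n : ℤ)) * (c m : ℂ) else 0)) 0 0
      = fun m : ℤ => (if m ≠ 0 ∧ (n : ℤ) ∣ m then Complex.I ^ (m / (n : ℤ)) * (c m : ℂ) else 0) := by
    funext m
    by_cases hm : m = 0
    · subst hm; simp
    · rw [Function.update_of_ne hm]
      by_cases hd : (n : ℤ) ∣ m
      · rw [if_pos hd, if_pos ⟨hm, hd⟩]
      · rw [if_neg hd, if_neg (fun h => hd h.2)]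
  rw [hupdeq, hg0] at Hupd
  have Hsub : HasSum (fun m : {m : ℤ // m ≠ 0 ∧ (n : ℤ) ∣ m} =>
      Complex.I ^ ((m : ℤ) / (n : ℤ)) * (c (m : ℤ) : ℂ)) (S - c 0) := by
    have hss : Function.support
        (fun m : ℤ => (if m ≠ 0 ∧ (n : ℤ) ∣ m then Complex.I ^ (m / (n : ℤ)) * (c m : ℂ) else 0))
        ⊆ {m : ℤ | m ≠ 0 ∧ (n : ℤ) ∣ m} := by
      intro m hm
      by_contra h
      exact hm (if_neg h)
    rw [show S - (c 0 : ℂ) = 0 - (c 0 : ℂ) + S by ring]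
    have H2 := (hasSum_subtype_iff_of_support_subset hss).mpr Hupd
    have H3 : HasSum (fun m : {m : ℤ // m ≠ 0 ∧ (n : ℤ) ∣ m} =>
        (if (m : ℤ) ≠ 0 ∧ (n : ℤ) ∣ m then Complex.I ^ ((m : ℤ) / (n : ℤ)) * (c m : ℂ) else 0))
        (0 - (c 0 : ℂ) + S) := H2
    convert H3 using 1
    funext m
    simp [m.2]
  rw [Hsub.tsum_eq]
  -- rewrite the goal's sum
  have hzsum : (∑ k ∈ Finset.range n,
      f (Complex.exp (2 * (Real.pi : ℂ) * Complex.I / (4 * n)) *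
         Complex.exp (2 * (Real.pi : ℂ) * Complex.I * (k + 1) / n)))
      = (n : ℂ) * S := by
    rw [hS, mul_div_cancel₀ _ hn']
    exact Finset.sum_congr rfl fun k _ => by rw [hz k]
  rw [hzsum]
  have hre : ((n : ℂ) * S).re = (n : ℝ) * S.re := by
    simp [Complex.mul_re, Complex.natCast_im, Complex.natCast_re]
  rw [hre]
  have : (S - (c 0 : ℂ)).re = S.re - c 0 := by simp
  rw [this]
  field_simp
  ring
end
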